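/- arXiv:0809.2052 — 3 statements merged into one kernel-verified Lean document; each statement's English description precedes it below -/
import Mathlib

section
/- For every unit vector σ ∈ S¹, the circularly averaged pressure P_σ satisfies the axially symmetric wave equation ∂²_t P_σ(z,r,t) = r⁻¹ ∂_r ( r ∂_r P_σ(z,r,t) ) + ∂²_z P_σ(z,r,t) for all (z,r,t) ∈ ℝ × (0,∞) × ℝ, together with the initial conditions P_σ(z,r,0) = F_σ(z,r) and ∂_t P_σ(z,r,0) = 0 for all (z,r) ∈ ℝ × (0,∞); moreover, for every compact set K ⊂ ℝ × ℝ of (z,t)-values, P_σ is bounded on {(z,r,t) : (z,t) ∈ K, 0 < r < 1}. -/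
open Real MeasureTheory

noncomputable def J0 (x : ℝ) : ℝ := (1 / π) * ∫ θ in (0:ℝ)..π, Real.cos (x * Real.sin θ)

noncomputable def J1 (x : ℝ) : ℝ := (1 / π) * ∫ θ in (0:ℝ)..π, Real.cos (θ - x * Real.sin θ)

open intervalIntegral

private lemma my_pd_eq {G : ℝ → ℝ → ℝ} (hG : ContDiff ℝ (⊤ : ℕ∞) (fun q : ℝ × ℝ => G q.1 q.2))
    (y α : ℝ) :
    HasDerivAt (fun y' => G y' α) (fderiv ℝ (fun q : ℝ × ℝ => G q.1 q.2) (y, α) (1, 0)) y := by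
  have h1 : HasFDerivAt (fun q : ℝ × ℝ => G q.1 q.2)
      (fderiv ℝ (fun q : ℝ × ℝ => G q.1 q.2) (y, α)) (y, α) :=
    (hG.differentiable (by simp) (y, α)).hasFDerivAt
  have h2 : HasDerivAt (fun y' : ℝ => (y', α)) ((1 : ℝ), (0 : ℝ)) y := by
    simpa using ((hasDerivAt_id y).prodMk (hasDerivAt_const y α))
  simpa [Function.comp_def] using h1.comp_hasDerivAt y h2

private lemma my_contDiff_pderiv {G : ℝ → ℝ → ℝ}
    (hG : ContDiff ℝ (⊤ : ℕ∞) (fun q : ℝ × ℝ => G q.1 q.2)) :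
    ContDiff ℝ (⊤ : ℕ∞) (fun q : ℝ × ℝ => deriv (fun y => G y q.2) q.1) := by
  have h : (fun q : ℝ × ℝ => deriv (fun y => G y q.2) q.1)
      = fun q : ℝ × ℝ => fderiv ℝ (fun q : ℝ × ℝ => G q.1 q.2) q (1, 0) := by
    funext q
    exact (my_pd_eq hG q.1 q.2).deriv
  rw [h]
  exact (hG.fderiv_right (by simp)).clm_apply contDiff_const

private lemma my_swap {G : ℝ → ℝ → ℝ} (hG : ContDiff ℝ (⊤ : ℕ∞) (fun q : ℝ × ℝ => G q.1 q.2))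
    (a b x₀ : ℝ) :
    HasDerivAt (fun y => ∫ α in a..b, G y α) (∫ α in a..b, deriv (fun y => G y α) x₀) x₀ := by
  set Gu := fun q : ℝ × ℝ => G q.1 q.2 with hGu
  set F' : ℝ → ℝ → ℝ := fun y α => fderiv ℝ Gu (y, α) (1, 0) with hF'
  have hF'cd : ContDiff ℝ (⊤ : ℕ∞) (fun q : ℝ × ℝ => fderiv ℝ Gu q (1, 0)) :=
    (hG.fderiv_right (by simp)).clm_apply contDiff_const
  have hF'cont : Continuous (fun q : ℝ × ℝ => fderiv ℝ Gu q (1, 0)) := hF'cd.continuous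
  obtain ⟨C, hC⟩ : ∃ C, ∀ q ∈ (Set.Icc (x₀ - 1) (x₀ + 1)) ×ˢ (Set.uIcc a b),
      ‖fderiv ℝ Gu q (1, 0)‖ ≤ C := by
    rcases (isCompact_Icc.prod isCompact_uIcc).exists_bound_of_continuousOn
      hF'cont.continuousOn with ⟨C, hC⟩
    exact ⟨C, hC⟩
  have key := hasDerivAt_integral_of_dominated_loc_of_deriv_le (F := fun y α => G y α)
    (F' := F') (x₀ := x₀) (a := a) (b := b) (μ := volume) (bound := fun _ => C)
    (s := Metric.ball x₀ 1) (Metric.ball_mem_nhds x₀ one_pos)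
    (Filter.Eventually.of_forall fun y =>
      ((hG.continuous.comp (continuous_const.prodMk continuous_id)).aestronglyMeasurable))
    ((hG.continuous.comp (continuous_const.prodMk continuous_id)).intervalIntegrable a b)
    ((hF'cont.comp (continuous_const.prodMk continuous_id)).aestronglyMeasurable)
    (Filter.Eventually.of_forall fun α hα y hy => by
      exact hC (y, α) ⟨by
        have := Metric.mem_ball.mp hy
        rw [Real.dist_eq] at this
        constructor <;> [linarith [abs_le.mp this.le |>.1]; linarith [abs_le.mp this.le |>.2]],
        Set.uIoc_subset_uIcc hα⟩)
    (intervalIntegrable_const)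
    (Filter.Eventually.of_forall fun α hα y hy => my_pd_eq hG y α)
  have heq : (∫ α in a..b, F' x₀ α) = ∫ α in a..b, deriv (fun y => G y α) x₀ :=
    intervalIntegral.integral_congr fun α _ => ((my_pd_eq hG x₀ α).deriv).symm
  exact heq ▸ key.2

private lemma my_curve1 {g : (Fin 3 → ℝ) → ℝ} (hg : ContDiff ℝ (⊤ : ℕ∞) g) {γ : ℝ → Fin 3 → ℝ}
    {s : ℝ} {v : Fin 3 → ℝ} (hγ : HasDerivAt γ v s) :
    HasDerivAt (fun u => g (γ u)) (fderiv ℝ g (γ s) v) s := by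
  simpa [Function.comp_def] using (hg.differentiable (by simp) (γ s)).hasFDerivAt.comp_hasDerivAt s hγ

private lemma my_curve2 {g : (Fin 3 → ℝ) → ℝ} (hg : ContDiff ℝ (⊤ : ℕ∞) g) {γ : ℝ → Fin 3 → ℝ}
    {v' : ℝ → Fin 3 → ℝ} {s : ℝ} {w : Fin 3 → ℝ}
    (hγ : ∀ u, HasDerivAt γ (v' u) u) (hv : HasDerivAt v' w s) :
    HasDerivAt (fun u => deriv (fun u' => g (γ u')) u)
      (fderiv ℝ (fderiv ℝ g) (γ s) (v' s) (v' s) + fderiv ℝ g (γ s) w) s := by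
  have heq : (fun u => deriv (fun u' => g (γ u')) u) = fun u => fderiv ℝ g (γ u) (v' u) := by
    funext u; exact (my_curve1 hg (hγ u)).deriv
  rw [heq]
  have hc : HasDerivAt (fun u => fderiv ℝ g (γ u)) ((fderiv ℝ (fderiv ℝ g) (γ s)) (v' s)) s := by
    have hd : HasFDerivAt (fderiv ℝ g) (fderiv ℝ (fderiv ℝ g) (γ s)) (γ s) :=
      (((hg.fderiv_right (m := (⊤ : ℕ∞)) (by simp)).differentiable (by simp)) (γ s)).hasFDerivAt
    simpa [Function.comp_def] using hd.comp_hasDerivAt s (hγ s)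
  exact hc.clm_apply hv

private lemma myD2 {g : (Fin 3 → ℝ) → ℝ} (hg : ContDiff ℝ (⊤ : ℕ∞) g) (x : Fin 3 → ℝ) (i : Fin 3) :
    iteratedDeriv 2 (fun u => g (Function.update x i u)) (x i)
      = fderiv ℝ (fderiv ℝ g) x (Pi.single i 1) (Pi.single i 1) := by
  have hupd : ∀ u : ℝ, HasDerivAt (fun u' => Function.update x i u')
      ((Pi.single i 1 : Fin 3 → ℝ)) u := by
    intro u; rw [hasDerivAt_pi]; intro j
    simp only [Function.update_apply, Pi.single_apply]
    by_cases h : j = i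
    · simp only [h, if_pos rfl, if_true]
      exact hasDerivAt_id u
    · simp only [if_neg h]
      exact hasDerivAt_const u (x j)
  have h2 := my_curve2 hg (v' := fun _ => (Pi.single i 1 : Fin 3 → ℝ)) hupd
    (hasDerivAt_const (x i) (Pi.single i 1 : Fin 3 → ℝ))
  rw [iteratedDeriv_succ, iteratedDeriv_one]
  have h3 := h2.deriv
  rw [Function.update_eq_self] at h3
  simp only [map_zero, add_zero] at h3
  exact h3

private lemma my_alg (B : (Fin 3 → ℝ) →L[ℝ] (Fin 3 → ℝ) →L[ℝ] ℝ) (c0 s0 : ℝ)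
    (h : c0 ^ 2 + s0 ^ 2 = 1) (v w : Fin 3 → ℝ) :
    B (c0 • v + s0 • w) (c0 • v + s0 • w) + B ((-s0) • v + c0 • w) ((-s0) • v + c0 • w)
      = B v v + B w w := by
  simp only [map_add, _root_.map_smul, ContinuousLinearMap.add_apply, ContinuousLinearMap.smul_apply,
    smul_eq_mul]
  linear_combination (B v v + B w w) * h

theorem stmt0
    (R : ℝ) (hR : 0 < R)
    (f : (Fin 3 → ℝ) → ℝ) (hf_smooth : ContDiff ℝ (⊤ : ℕ∞) f)
    (hf_supp : HasCompactSupport f)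
    (hf_cyl : ∀ x : Fin 3 → ℝ, R ^ 2 ≤ (x 0) ^ 2 + (x 1) ^ 2 → f x = 0)
    (p : (Fin 3 → ℝ) → ℝ → ℝ)
    (hp_smooth : ContDiff ℝ (⊤ : ℕ∞) (fun q : (Fin 3 → ℝ) × ℝ => p q.1 q.2))
    (hp_wave : ∀ (x : Fin 3 → ℝ) (t : ℝ),
      iteratedDeriv 2 (fun s => p x s) t
        = ∑ i : Fin 3, iteratedDeriv 2 (fun u => p (Function.update x i u) t) (x i))
    (hp_init : ∀ x, p x 0 = f x)
    (hp_init' : ∀ x, deriv (fun s => p x s) 0 = 0)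
    (σ : ℝ × ℝ) (hσ : σ.1 ^ 2 + σ.2 ^ 2 = 1)
    (Φ : ℝ → ℝ → ℝ → (Fin 3 → ℝ))
    (hΦ : ∀ z r α, Φ z r α = ![R * σ.1 + r * Real.cos α, R * σ.2 + r * Real.sin α, z])
    (P : ℝ → ℝ → ℝ → ℝ)
    (hP : ∀ z r t, P z r t = (1 / (2 * π)) * ∫ α in (0:ℝ)..(2 * π), p (Φ z r α) t)
    (F : ℝ → ℝ → ℝ)
    (hF : ∀ z r, F z r = (1 / (2 * π)) * ∫ α in (0:ℝ)..(2 * π), f (Φ z r α))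
    :
    (∀ (z r t : ℝ), 0 < r →
      iteratedDeriv 2 (fun s => P z r s) t
        = r⁻¹ * deriv (fun ρ => ρ * deriv (fun ρ' => P z ρ' t) ρ) r
          + iteratedDeriv 2 (fun w => P w r t) z)
    ∧ (∀ z r : ℝ, 0 < r → P z r 0 = F z r)
    ∧ (∀ z r : ℝ, 0 < r → deriv (fun s => P z r s) 0 = 0)
    ∧ (∀ K : Set (ℝ × ℝ), IsCompact K →
        ∃ C : ℝ, ∀ z r t : ℝ, (z, t) ∈ K → 0 < r → r < 1 → |P z r t| ≤ C) := by
  -- smoothness of Φ, uncurried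
  have hΦsm : ContDiff ℝ (⊤ : ℕ∞) (fun w : ℝ × ℝ × ℝ => Φ w.1 w.2.1 w.2.2) := by
    have he : (fun w : ℝ × ℝ × ℝ => Φ w.1 w.2.1 w.2.2) = fun w : ℝ × ℝ × ℝ =>
        (![R * σ.1 + w.2.1 * Real.cos w.2.2, R * σ.2 + w.2.1 * Real.sin w.2.2, w.1]
          : Fin 3 → ℝ) := by
      funext w; rw [hΦ]
    rw [he]
    apply contDiff_pi.mpr
    intro i
    fin_cases i <;> simp only [Matrix.cons_val_zero, Matrix.cons_val_one, Matrix.head_cons,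
      Matrix.cons_val_two, Matrix.tail_cons]
    · exact contDiff_const.add ((contDiff_fst.comp contDiff_snd).mul
        (Real.contDiff_cos.comp (contDiff_snd.comp contDiff_snd)))
    · exact contDiff_const.add ((contDiff_fst.comp contDiff_snd).mul
        (Real.contDiff_sin.comp (contDiff_snd.comp contDiff_snd)))
    · exact contDiff_fst
  -- smoothness of p at fixed time
  have hg : ∀ t : ℝ, ContDiff ℝ (⊤ : ℕ∞) (fun v : Fin 3 → ℝ => p v t) := fun t =>
    hp_smooth.comp (contDiff_id.prodMk contDiff_const)
  -- uncurried smoothness for the three parametric integrals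
  have hGt : ∀ z r : ℝ, ContDiff ℝ (⊤ : ℕ∞) (fun q : ℝ × ℝ => p (Φ z r q.2) q.1) := fun z r =>
    hp_smooth.comp ((hΦsm.comp (contDiff_const.prodMk
      (contDiff_const.prodMk contDiff_snd))).prodMk contDiff_fst)
  have hGz : ∀ r t : ℝ, ContDiff ℝ (⊤ : ℕ∞) (fun q : ℝ × ℝ => p (Φ q.1 r q.2) t) := fun r t =>
    hp_smooth.comp ((hΦsm.comp (contDiff_fst.prodMk
      (contDiff_const.prodMk contDiff_snd))).prodMk contDiff_const)
  have hGr : ∀ z t : ℝ, ContDiff ℝ (⊤ : ℕ∞) (fun q : ℝ × ℝ => p (Φ z q.1 q.2) t) := fun z t =>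
    hp_smooth.comp ((hΦsm.comp (contDiff_const.prodMk
      (contDiff_fst.prodMk contDiff_snd))).prodMk contDiff_const)
  -- differentiation under the integral sign: time
  have hswapT : ∀ z r t : ℝ, HasDerivAt (fun s => P z r s)
      ((1 / (2 * π)) * ∫ α in (0:ℝ)..(2 * π), deriv (fun s' => p (Φ z r α) s') t) t := by
    intro z r t
    have he : (fun s => P z r s)
        = fun s => (1 / (2 * π)) * ∫ α in (0:ℝ)..(2 * π), p (Φ z r α) s :=
      funext fun s => hP z r s
    rw [he]
    exact (my_swap (hGt z r) 0 (2 * π) t).const_mul (1 / (2 * π))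
  have hswapT2 : ∀ z r t : ℝ, HasDerivAt (fun s => deriv (fun s' => P z r s') s)
      ((1 / (2 * π)) * ∫ α in (0:ℝ)..(2 * π),
        deriv (fun s => deriv (fun s' => p (Φ z r α) s') s) t) t := by
    intro z r t
    have he : (fun s => deriv (fun s' => P z r s') s)
        = fun s => (1 / (2 * π)) * ∫ α in (0:ℝ)..(2 * π),
            deriv (fun s' => p (Φ z r α) s') s :=
      funext fun s => (hswapT z r s).deriv
    rw [he]
    exact (my_swap (my_contDiff_pderiv (G := fun y α => p (Φ z r α) y) (hGt z r)) 0 (2 * π) t).const_mul (1 / (2 * π))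
  -- z direction
  have hswapZ : ∀ z r t : ℝ, HasDerivAt (fun w => P w r t)
      ((1 / (2 * π)) * ∫ α in (0:ℝ)..(2 * π), deriv (fun w' => p (Φ w' r α) t) z) z := by
    intro z r t
    have he : (fun w => P w r t)
        = fun w => (1 / (2 * π)) * ∫ α in (0:ℝ)..(2 * π), p (Φ w r α) t :=
      funext fun w => hP w r t
    rw [he]
    exact (my_swap (hGz r t) 0 (2 * π) z).const_mul (1 / (2 * π))
  have hswapZ2 : ∀ z r t : ℝ, HasDerivAt (fun w => deriv (fun w' => P w' r t) w)
      ((1 / (2 * π)) * ∫ α in (0:ℝ)..(2 * π),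
        deriv (fun w => deriv (fun w' => p (Φ w' r α) t) w) z) z := by
    intro z r t
    have he : (fun w => deriv (fun w' => P w' r t) w)
        = fun w => (1 / (2 * π)) * ∫ α in (0:ℝ)..(2 * π),
            deriv (fun w' => p (Φ w' r α) t) w :=
      funext fun w => (hswapZ w r t).deriv
    rw [he]
    exact (my_swap (my_contDiff_pderiv (G := fun y α => p (Φ y r α) t) (hGz r t)) 0 (2 * π) z).const_mul (1 / (2 * π))
  -- r direction
  have hswapR : ∀ z r t : ℝ, HasDerivAt (fun ρ => P z ρ t)
      ((1 / (2 * π)) * ∫ α in (0:ℝ)..(2 * π), deriv (fun ρ' => p (Φ z ρ' α) t) r) r := by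
    intro z r t
    have he : (fun ρ => P z ρ t)
        = fun ρ => (1 / (2 * π)) * ∫ α in (0:ℝ)..(2 * π), p (Φ z ρ α) t :=
      funext fun ρ => hP z ρ t
    rw [he]
    exact (my_swap (hGr z t) 0 (2 * π) r).const_mul (1 / (2 * π))
  have hswapR2 : ∀ z r t : ℝ, HasDerivAt (fun ρ => deriv (fun ρ' => P z ρ' t) ρ)
      ((1 / (2 * π)) * ∫ α in (0:ℝ)..(2 * π),
        deriv (fun ρ => deriv (fun ρ' => p (Φ z ρ' α) t) ρ) r) r := by
    intro z r t
    have he : (fun ρ => deriv (fun ρ' => P z ρ' t) ρ)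
        = fun ρ => (1 / (2 * π)) * ∫ α in (0:ℝ)..(2 * π),
            deriv (fun ρ' => p (Φ z ρ' α) t) ρ :=
      funext fun ρ => (hswapR z ρ t).deriv
    rw [he]
    exact (my_swap (my_contDiff_pderiv (G := fun y α => p (Φ z y α) t) (hGr z t)) 0 (2 * π) r).const_mul (1 / (2 * π))
  refine ⟨?_, ?_, ?_, ?_⟩
  · -- the axisymmetric wave equation
    intro z r t hr
    -- continuity helpers
    have hΦc : Continuous (fun β : ℝ => Φ z r β) :=
      hΦsm.continuous.comp (continuous_const.prodMk (continuous_const.prodMk continuous_id))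
    have hccd : ContDiff ℝ (⊤ : ℕ∞) (fderiv ℝ (fun v : Fin 3 → ℝ => p v t)) :=
      (hg t).fderiv_right (by simp)
    have hcd : Continuous (fun β : ℝ => fderiv ℝ (fun v : Fin 3 → ℝ => p v t) (Φ z r β)) :=
      hccd.continuous.comp hΦc
    have hccB : ContDiff ℝ (⊤ : ℕ∞) (fderiv ℝ (fderiv ℝ (fun v : Fin 3 → ℝ => p v t))) :=
      hccd.fderiv_right (by simp)
    have hcB : Continuous
        (fun β : ℝ => fderiv ℝ (fderiv ℝ (fun v : Fin 3 → ℝ => p v t)) (Φ z r β)) :=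
      hccB.continuous.comp hΦc
    have hce : Continuous (fun β : ℝ => (![Real.cos β, Real.sin β, 0] : Fin 3 → ℝ)) := by
      refine continuous_pi fun j => ?_
      fin_cases j <;> simp only [Matrix.cons_val_zero, Matrix.cons_val_one, Matrix.head_cons,
        Matrix.cons_val_two, Matrix.tail_cons]
      exacts [Real.continuous_cos, Real.continuous_sin, continuous_const]
    have hce' : Continuous (fun β : ℝ => (![-Real.sin β, Real.cos β, 0] : Fin 3 → ℝ)) := by
      refine continuous_pi fun j => ?_
      fin_cases j <;> simp only [Matrix.cons_val_zero, Matrix.cons_val_one, Matrix.head_cons,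
        Matrix.cons_val_two, Matrix.tail_cons]
      exacts [Real.continuous_sin.neg, Real.continuous_cos, continuous_const]
    -- curve derivatives
    have hΦr : ∀ ρ α : ℝ, HasDerivAt (fun ρ' => Φ z ρ' α)
        (![Real.cos α, Real.sin α, 0]) ρ := by
      intro ρ α
      have he : (fun ρ' => Φ z ρ' α) = fun ρ' =>
          (![R * σ.1 + ρ' * Real.cos α, R * σ.2 + ρ' * Real.sin α, z] : Fin 3 → ℝ) :=
        funext fun ρ' => hΦ z ρ' α
      rw [he, hasDerivAt_pi]
      intro j
      fin_cases j <;> simp only [Matrix.cons_val_zero, Matrix.cons_val_one, Matrix.head_cons,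
        Matrix.cons_val_two, Matrix.tail_cons]
      · simpa using ((hasDerivAt_id ρ).mul_const (Real.cos α)).const_add (R * σ.1)
      · simpa using ((hasDerivAt_id ρ).mul_const (Real.sin α)).const_add (R * σ.2)
      · exact hasDerivAt_const ρ z
    have hΦz : ∀ w α : ℝ, HasDerivAt (fun w' => Φ w' r α)
        ((Pi.single 2 1 : Fin 3 → ℝ)) w := by
      intro w α
      have he : (fun w' => Φ w' r α) = fun w' =>
          (![R * σ.1 + r * Real.cos α, R * σ.2 + r * Real.sin α, w'] : Fin 3 → ℝ) :=
        funext fun w' => hΦ w' r α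
      rw [he, hasDerivAt_pi]
      intro j
      fin_cases j
      · simpa using hasDerivAt_const w (R * σ.1 + r * Real.cos α)
      · simpa using hasDerivAt_const w (R * σ.2 + r * Real.sin α)
      · simpa using hasDerivAt_id' w
    have hΦα : ∀ β : ℝ, HasDerivAt (fun β' => Φ z r β')
        (r • ![-Real.sin β, Real.cos β, 0]) β := by
      intro β
      have he : (fun β' => Φ z r β') = fun β' =>
          (![R * σ.1 + r * Real.cos β', R * σ.2 + r * Real.sin β', z] : Fin 3 → ℝ) :=
        funext fun β' => hΦ z r β'
      rw [he, hasDerivAt_pi]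
      intro j
      fin_cases j
      · simpa using ((Real.hasDerivAt_cos β).const_mul r).const_add (R * σ.1)
      · simpa using ((Real.hasDerivAt_sin β).const_mul r).const_add (R * σ.2)
      · simpa using hasDerivAt_const β z
    have hv' : ∀ β : ℝ, HasDerivAt
        (fun β' => r • (![-Real.sin β', Real.cos β', 0] : Fin 3 → ℝ))
        ((-r) • ![Real.cos β, Real.sin β, 0]) β := by
      intro β
      rw [hasDerivAt_pi]
      intro j
      fin_cases j
      · simpa using (Real.hasDerivAt_sin β).neg.const_mul r
      · simpa using (Real.hasDerivAt_cos β).const_mul r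
      · simpa using hasDerivAt_const β (0 : ℝ)
    -- pointwise second derivatives
    have hI1 : ∀ α : ℝ, deriv (fun s => deriv (fun s' => p (Φ z r α) s') s) t
        = ∑ i : Fin 3, fderiv ℝ (fderiv ℝ (fun v => p v t)) (Φ z r α)
            (Pi.single i 1) (Pi.single i 1) := by
      intro α
      have hw := hp_wave (Φ z r α) t
      rw [iteratedDeriv_succ, iteratedDeriv_one] at hw
      have h0 : deriv (fun s => deriv (fun s' => p (Φ z r α) s') s) t
          = ∑ i : Fin 3, iteratedDeriv 2 (fun u => p (Function.update (Φ z r α) i u) t)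
              ((Φ z r α) i) := hw
      rw [h0]
      exact Finset.sum_congr rfl fun i _ => myD2 (hg t) (Φ z r α) i
    have hI2 : ∀ α : ℝ, deriv (fun ρ => deriv (fun ρ' => p (Φ z ρ' α) t) ρ) r
        = fderiv ℝ (fderiv ℝ (fun v => p v t)) (Φ z r α)
            ![Real.cos α, Real.sin α, 0] ![Real.cos α, Real.sin α, 0] := by
      intro α
      have h := (my_curve2 (hg t) (γ := fun ρ' => Φ z ρ' α)
        (v' := fun _ => (![Real.cos α, Real.sin α, 0] : Fin 3 → ℝ))
        (fun ρ => hΦr ρ α) (hasDerivAt_const r _)).deriv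
      simpa using h
    have hI4 : ∀ α : ℝ, deriv (fun w => deriv (fun w' => p (Φ w' r α) t) w) z
        = fderiv ℝ (fderiv ℝ (fun v => p v t)) (Φ z r α)
            (Pi.single 2 1) (Pi.single 2 1) := by
      intro α
      have h := (my_curve2 (hg t) (γ := fun w' => Φ w' r α)
        (v' := fun _ => (Pi.single 2 1 : Fin 3 → ℝ))
        (fun w => hΦz w α) (hasDerivAt_const z _)).deriv
      simpa using h
    have hI3 : ∀ ρ α : ℝ, deriv (fun ρ' => p (Φ z ρ' α) t) ρ
        = fderiv ℝ (fun v => p v t) (Φ z ρ α) ![Real.cos α, Real.sin α, 0] :=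
      fun ρ α => (my_curve1 (hg t) (hΦr ρ α)).deriv
    -- the angular term integrates to zero
    have hcW : Continuous (fun β : ℝ =>
        fderiv ℝ (fderiv ℝ (fun v => p v t)) (Φ z r β)
          (r • ![-Real.sin β, Real.cos β, 0]) (r • ![-Real.sin β, Real.cos β, 0])
        + fderiv ℝ (fun v => p v t) (Φ z r β) ((-r) • ![Real.cos β, Real.sin β, 0])) :=
      ((hcB.clm_apply (hce'.const_smul r)).clm_apply (hce'.const_smul r)).add
        (hcd.clm_apply (hce.const_smul (-r)))
    have hA : ∀ β : ℝ, HasDerivAt (fun β' => deriv (fun β'' => p (Φ z r β'') t) β')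
        (fderiv ℝ (fderiv ℝ (fun v => p v t)) (Φ z r β)
          (r • ![-Real.sin β, Real.cos β, 0]) (r • ![-Real.sin β, Real.cos β, 0])
        + fderiv ℝ (fun v => p v t) (Φ z r β) ((-r) • ![Real.cos β, Real.sin β, 0])) β :=
      fun β => my_curve2 (hg t) (γ := fun β' => Φ z r β')
        (v' := fun β' => r • (![-Real.sin β', Real.cos β', 0] : Fin 3 → ℝ)) hΦα (hv' β)
    have hFTC : (∫ β in (0:ℝ)..(2 * π),
        (fderiv ℝ (fderiv ℝ (fun v => p v t)) (Φ z r β)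
          (r • ![-Real.sin β, Real.cos β, 0]) (r • ![-Real.sin β, Real.cos β, 0])
        + fderiv ℝ (fun v => p v t) (Φ z r β) ((-r) • ![Real.cos β, Real.sin β, 0]))) = 0 := by
      rw [intervalIntegral.integral_eq_sub_of_hasDerivAt (fun β _ => hA β)
        (hcW.intervalIntegrable 0 (2 * π))]
      have hval : ∀ β : ℝ, deriv (fun β'' => p (Φ z r β'') t) β
          = fderiv ℝ (fun v => p v t) (Φ z r β) (r • ![-Real.sin β, Real.cos β, 0]) :=
        fun β => (my_curve1 (hg t) (hΦα β)).deriv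
      rw [hval, hval]
      have h1 : Φ z r (2 * π) = Φ z r 0 := by
        rw [hΦ, hΦ]; norm_num [Real.cos_two_pi, Real.sin_two_pi]
      have h2 : (![-Real.sin (2 * π), Real.cos (2 * π), 0] : Fin 3 → ℝ)
          = ![-Real.sin 0, Real.cos 0, 0] := by
        norm_num [Real.cos_two_pi, Real.sin_two_pi]
      rw [h1, h2, sub_self]
    -- the pointwise algebraic identity
    have hptws : ∀ α : ℝ,
        (∑ i : Fin 3, fderiv ℝ (fderiv ℝ (fun v => p v t)) (Φ z r α)
            (Pi.single i 1) (Pi.single i 1))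
        = fderiv ℝ (fderiv ℝ (fun v => p v t)) (Φ z r α)
            ![Real.cos α, Real.sin α, 0] ![Real.cos α, Real.sin α, 0]
          + r⁻¹ * fderiv ℝ (fun v => p v t) (Φ z r α) ![Real.cos α, Real.sin α, 0]
          + fderiv ℝ (fderiv ℝ (fun v => p v t)) (Φ z r α) (Pi.single 2 1) (Pi.single 2 1)
          + (r ^ 2)⁻¹ * (fderiv ℝ (fderiv ℝ (fun v => p v t)) (Φ z r α)
              (r • ![-Real.sin α, Real.cos α, 0]) (r • ![-Real.sin α, Real.cos α, 0])
            + fderiv ℝ (fun v => p v t) (Φ z r α) ((-r) • ![Real.cos α, Real.sin α, 0])) := by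
      intro α
      have halg := my_alg (fderiv ℝ (fderiv ℝ (fun v => p v t)) (Φ z r α))
        (Real.cos α) (Real.sin α) (Real.cos_sq_add_sin_sq α) (Pi.single 0 1) (Pi.single 1 1)
      have he : Real.cos α • (Pi.single 0 1 : Fin 3 → ℝ)
          + Real.sin α • (Pi.single 1 1 : Fin 3 → ℝ) = ![Real.cos α, Real.sin α, 0] := by
        funext j; fin_cases j <;> simp
      have he' : (-Real.sin α) • (Pi.single 0 1 : Fin 3 → ℝ)
          + Real.cos α • (Pi.single 1 1 : Fin 3 → ℝ) = ![-Real.sin α, Real.cos α, 0] := by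
        funext j; fin_cases j <;> simp
      rw [he, he'] at halg
      rw [Fin.sum_univ_three]
      simp only [_root_.map_smul, ContinuousLinearMap.smul_apply, smul_eq_mul]
      have hrne : r ≠ 0 := hr.ne'
      field_simp
      linear_combination (-r) * halg
    -- assemble
    have hL : iteratedDeriv 2 (fun s => P z r s) t
        = (1 / (2 * π)) * ∫ α in (0:ℝ)..(2 * π),
            deriv (fun s => deriv (fun s' => p (Φ z r α) s') s) t := by
      rw [iteratedDeriv_succ, iteratedDeriv_one]
      exact (hswapT2 z r t).deriv
    have hZ : iteratedDeriv 2 (fun w => P w r t) z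
        = (1 / (2 * π)) * ∫ α in (0:ℝ)..(2 * π),
            deriv (fun w => deriv (fun w' => p (Φ w' r α) t) w) z := by
      rw [iteratedDeriv_succ, iteratedDeriv_one]
      exact (hswapZ2 z r t).deriv
    have hRad : deriv (fun ρ => ρ * deriv (fun ρ' => P z ρ' t) ρ) r
        = 1 * deriv (fun ρ' => P z ρ' t) r + r * ((1 / (2 * π)) * ∫ α in (0:ℝ)..(2 * π),
            deriv (fun ρ => deriv (fun ρ' => p (Φ z ρ' α) t) ρ) r) :=
      ((hasDerivAt_id' (x := r)).mul (hswapR2 z r t)).deriv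
    have hD : deriv (fun ρ' => P z ρ' t) r = (1 / (2 * π)) * ∫ α in (0:ℝ)..(2 * π),
        fderiv ℝ (fun v => p v t) (Φ z r α) ![Real.cos α, Real.sin α, 0] := by
      rw [(hswapR z r t).deriv]
      congr 1
      exact intervalIntegral.integral_congr fun α _ => hI3 r α
    rw [hL, hZ, hRad, hD,
      intervalIntegral.integral_congr (fun α _ => hI1 α),
      intervalIntegral.integral_congr (fun α _ => hI2 α),
      intervalIntegral.integral_congr (fun α _ => hI4 α),
      intervalIntegral.integral_congr (fun α _ => hptws α)]
    -- integrability for splitting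
    have hiB : IntervalIntegrable (fun α : ℝ =>
        fderiv ℝ (fderiv ℝ (fun v => p v t)) (Φ z r α)
          ![Real.cos α, Real.sin α, 0] ![Real.cos α, Real.sin α, 0]) volume 0 (2 * π) :=
      ((hcB.clm_apply hce).clm_apply hce).intervalIntegrable _ _
    have hid : IntervalIntegrable (fun α : ℝ =>
        fderiv ℝ (fun v => p v t) (Φ z r α) ![Real.cos α, Real.sin α, 0]) volume 0 (2 * π) :=
      (hcd.clm_apply hce).intervalIntegrable _ _
    have hiZ : IntervalIntegrable (fun α : ℝ =>
        fderiv ℝ (fderiv ℝ (fun v => p v t)) (Φ z r α)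
          (Pi.single 2 1) (Pi.single 2 1)) volume 0 (2 * π) :=
      ((hcB.clm_apply continuous_const).clm_apply continuous_const).intervalIntegrable _ _
    have hiW : IntervalIntegrable (fun β : ℝ =>
        fderiv ℝ (fderiv ℝ (fun v => p v t)) (Φ z r β)
          (r • ![-Real.sin β, Real.cos β, 0]) (r • ![-Real.sin β, Real.cos β, 0])
        + fderiv ℝ (fun v => p v t) (Φ z r β) ((-r) • ![Real.cos β, Real.sin β, 0]))
        volume 0 (2 * π) :=
      hcW.intervalIntegrable _ _
    rw [intervalIntegral.integral_add ((hiB.add (hid.const_mul r⁻¹)).add hiZ)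
        (hiW.const_mul ((r ^ 2)⁻¹)),
      intervalIntegral.integral_add (hiB.add (hid.const_mul r⁻¹)) hiZ,
      intervalIntegral.integral_add hiB (hid.const_mul r⁻¹),
      intervalIntegral.integral_const_mul, intervalIntegral.integral_const_mul, hFTC]
    have hrne : r ≠ 0 := hr.ne'
    field_simp
    ring
  · -- initial value
    intro z r hr
    rw [hP, hF]
    congr 1
    exact intervalIntegral.integral_congr fun α _ => hp_init (Φ z r α)
  · -- initial time derivative
    intro z r hr
    rw [(hswapT z r 0).deriv,
      intervalIntegral.integral_congr (fun α _ => hp_init' (Φ z r α))]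
    simp
  · intro K hK
    obtain ⟨M, hM⟩ := hK.isBounded.subset_closedBall (0 : ℝ × ℝ)
    set N : ℝ := |R| + M + 1 with hN
    obtain ⟨C, hC⟩ := (isCompact_closedBall (0 : (Fin 3 → ℝ) × ℝ) N).exists_bound_of_continuousOn
      hp_smooth.continuous.continuousOn
    refine ⟨|1 / (2 * π)| * (C * |2 * π - 0|), ?_⟩
    intro z r t hzt hr hr1
    have hdist := hM hzt
    rw [Metric.mem_closedBall, Prod.dist_eq] at hdist
    simp only [Prod.fst_zero, Prod.snd_zero] at hdist
    have hz : |z| ≤ M := by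
      have := le_trans (le_max_left (dist (z, t).1 0) (dist (z, t).2 0)) hdist
      rwa [Real.dist_eq, sub_zero] at this
    have ht : |t| ≤ M := by
      have := le_trans (le_max_right (dist (z, t).1 0) (dist (z, t).2 0)) hdist
      rwa [Real.dist_eq, sub_zero] at this
    have hM0 : (0:ℝ) ≤ M := le_trans (abs_nonneg z) hz
    have hσ1 : |σ.1| ≤ 1 := by rw [abs_le]; constructor <;> nlinarith [sq_nonneg σ.2]
    have hσ2 : |σ.2| ≤ 1 := by rw [abs_le]; constructor <;> nlinarith [sq_nonneg σ.1]
    have hrb : |r| ≤ 1 := by rw [abs_of_pos hr]; exact hr1.le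
    have hmem : ∀ α : ℝ, (Φ z r α, t) ∈ Metric.closedBall (0 : (Fin 3 → ℝ) × ℝ) N := by
      intro α
      rw [Metric.mem_closedBall, Prod.dist_eq]
      simp only [Prod.fst_zero, Prod.snd_zero]
      have hN0 : (0:ℝ) ≤ N := by positivity
      apply max_le
      · rw [dist_zero_right]
        rw [pi_norm_le_iff_of_nonneg hN0]
        intro i
        rw [hΦ]
        fin_cases i <;>
          simp only [Matrix.cons_val_zero, Matrix.cons_val_one, Matrix.head_cons,
            Matrix.cons_val_two, Matrix.tail_cons, Real.norm_eq_abs]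
        · calc |R * σ.1 + r * Real.cos α| ≤ |R| * |σ.1| + |r| * |Real.cos α| := by
                refine le_trans (abs_add_le _ _) ?_
                rw [abs_mul, abs_mul]
            _ ≤ |R| * 1 + 1 * 1 := by
                refine add_le_add (mul_le_mul_of_nonneg_left hσ1 (abs_nonneg R)) ?_
                exact mul_le_mul hrb (Real.abs_cos_le_one α) (abs_nonneg _) zero_le_one
            _ ≤ N := by rw [hN]; linarith
        · calc |R * σ.2 + r * Real.sin α| ≤ |R| * |σ.2| + |r| * |Real.sin α| := by
                refine le_trans (abs_add_le _ _) ?_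
                rw [abs_mul, abs_mul]
            _ ≤ |R| * 1 + 1 * 1 := by
                refine add_le_add (mul_le_mul_of_nonneg_left hσ2 (abs_nonneg R)) ?_
                exact mul_le_mul hrb (Real.abs_sin_le_one α) (abs_nonneg _) zero_le_one
            _ ≤ N := by rw [hN]; linarith
        · rw [hN]; calc |z| ≤ M := hz
            _ ≤ |R| + M + 1 := by nlinarith [abs_nonneg R]
      · rw [Real.dist_eq, sub_zero, hN]
        calc |t| ≤ M := ht
          _ ≤ |R| + M + 1 := by nlinarith [abs_nonneg R]
    rw [hP, abs_mul]
    refine mul_le_mul_of_nonneg_left ?_ (abs_nonneg _)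
    have : ‖∫ α in (0:ℝ)..(2 * π), p (Φ z r α) t‖ ≤ C * |2 * π - 0| :=
      intervalIntegral.norm_integral_le_of_norm_le_const fun α _ => hC _ (hmem α)
    exact this
end

section
/- For every v > 0 and r > 0 one has r⁻¹ · d/dr ( r · d/dr [J₀(rv)] ) = −v² J₀(rv); equivalently, J₀''(x) + x⁻¹ J₀'(x) + J₀(x) = 0 for all x > 0. -/
open Real MeasureTheory

/-!
Differentiating under the integral sign, `x J₀''(x) + J₀'(x) + x J₀(x)` is `1/π` times the integral
over `[0, π]` of `x cos² θ cos (x sin θ) - sin θ sin (x sin θ)` (after `sin² = 1 - cos²`). That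
integrand is the `θ`-derivative of `cos θ sin (x sin θ)`, which vanishes at `0` and `π`. The radial
form is the same equation at `x = r v`, by the chain rule.
-/

open Set Filter intervalIntegral
open scoped Interval

theorem intervalIntegral.hasDerivAt_integral_of_continuous {E : Type*} [NormedAddCommGroup E]
    [NormedSpace ℝ E] {F F' : ℝ → ℝ → E} {a b x₀ : ℝ}
    (hF : Continuous (Function.uncurry F)) (hF' : Continuous (Function.uncurry F'))
    (hderiv : ∀ x t, HasDerivAt (F · t) (F' x t) x) :
    HasDerivAt (fun x => ∫ t in a..b, F x t) (∫ t in a..b, F' x₀ t) x₀ := by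
  obtain ⟨C, hC⟩ := ((isCompact_closedBall x₀ 1).prod isCompact_uIcc).exists_bound_of_continuousOn
    (hF'.continuousOn (s := Metric.closedBall x₀ 1 ×ˢ [[a, b]]))
  have hF_cont : ∀ x, Continuous (F x) := fun x => hF.comp (Continuous.prodMk_right x)
  refine (hasDerivAt_integral_of_dominated_loc_of_deriv_le (bound := fun _ => C)
    (Metric.closedBall_mem_nhds x₀ one_pos)
    (Eventually.of_forall fun x => (hF_cont x).aestronglyMeasurable)
    ((hF_cont x₀).intervalIntegrable a b)
    (hF'.comp (Continuous.prodMk_right x₀)).aestronglyMeasurable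
    (Eventually.of_forall fun t ht x hx => hC (x, t) ⟨hx, uIoc_subset_uIcc ht⟩)
    intervalIntegrable_const
    (Eventually.of_forall fun t _ x _ => hderiv x t)).2

theorem hasDerivAt_J0 (x : ℝ) :
    HasDerivAt J0 ((1 / π) * ∫ θ in (0:ℝ)..π, -sin (x * sin θ) * sin θ) x :=
  (hasDerivAt_integral_of_continuous (by fun_prop) (by fun_prop)
    (fun x θ => (hasDerivAt_mul_const (sin θ)).cos)).const_mul (1 / π)

theorem deriv_J0 : deriv J0 = fun x => (1 / π) * ∫ θ in (0:ℝ)..π, -sin (x * sin θ) * sin θ :=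
  funext fun x => (hasDerivAt_J0 x).deriv

theorem hasDerivAt_deriv_J0 (x : ℝ) :
    HasDerivAt (deriv J0) ((1 / π) * ∫ θ in (0:ℝ)..π, -cos (x * sin θ) * sin θ ^ 2) x := by
  rw [deriv_J0]
  refine (hasDerivAt_integral_of_continuous (F := fun x θ => -sin (x * sin θ) * sin θ)
    (F' := fun x θ => -cos (x * sin θ) * sin θ ^ 2) (by fun_prop) (by fun_prop)
    (fun x θ => ?_)).const_mul (1 / π)
  exact ((hasDerivAt_mul_const (sin θ)).sin.fun_neg.mul_const (sin θ)).congr_deriv (by ring)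

theorem iteratedDeriv_two_J0 (x : ℝ) :
    iteratedDeriv 2 J0 x = (1 / π) * ∫ θ in (0:ℝ)..π, -cos (x * sin θ) * sin θ ^ 2 := by
  rw [iteratedDeriv_succ, iteratedDeriv_one]
  exact (hasDerivAt_deriv_J0 x).deriv

theorem integral_cos_sq_mul_cos_sub_sin_mul_sin_eq_zero (x : ℝ) :
    ∫ θ in (0:ℝ)..π, (x * cos θ ^ 2 * cos (x * sin θ) - sin θ * sin (x * sin θ)) = 0 := by
  have hderiv : ∀ θ ∈ [[0, π]], HasDerivAt (fun θ => cos θ * sin (x * sin θ))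
      (x * cos θ ^ 2 * cos (x * sin θ) - sin θ * sin (x * sin θ)) θ := fun θ _ =>
    ((hasDerivAt_cos θ).fun_mul ((hasDerivAt_sin θ).const_mul x).sin).congr_deriv (by ring)
  rw [integral_eq_sub_of_hasDerivAt hderiv (Continuous.intervalIntegrable (by fun_prop) _ _)]
  simp

theorem J0_bessel_ode (x : ℝ) : x * iteratedDeriv 2 J0 x + deriv J0 x + x * J0 x = 0 := by
  calc x * iteratedDeriv 2 J0 x + deriv J0 x + x * J0 x
      = (1 / π) * ∫ θ in (0:ℝ)..π, (x * (-cos (x * sin θ) * sin θ ^ 2)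
          + -sin (x * sin θ) * sin θ + x * cos (x * sin θ)) := by
        rw [intervalIntegral.integral_add, intervalIntegral.integral_add,
          intervalIntegral.integral_const_mul, intervalIntegral.integral_const_mul,
          iteratedDeriv_two_J0, deriv_J0, J0]
        · ring
        all_goals exact Continuous.intervalIntegrable (by fun_prop) _ _
    _ = (1 / π) * ∫ θ in (0:ℝ)..π, (x * cos θ ^ 2 * cos (x * sin θ) - sin θ * sin (x * sin θ)) := by
        congr 1
        refine integral_congr fun θ _ => ?_
        simp only [cos_sq']
        ring
    _ = 0 := by rw [integral_cos_sq_mul_cos_sub_sin_mul_sin_eq_zero, mul_zero]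

theorem deriv_mul_deriv_comp_mul_const {f : ℝ → ℝ} (hf : Differentiable ℝ f)
    (hf' : Differentiable ℝ (deriv f)) (v r : ℝ) :
    deriv (fun ρ => ρ * deriv (fun ρ' => f (ρ' * v)) ρ) r
      = v * (r * v * iteratedDeriv 2 f (r * v) + deriv f (r * v)) := by
  have hcomp : ∀ ρ, deriv (fun ρ' => f (ρ' * v)) ρ = deriv f (ρ * v) * v := fun ρ =>
    ((hf _).hasDerivAt.comp ρ (hasDerivAt_mul_const v)).deriv
  have hderiv : HasDerivAt (fun ρ => deriv f (ρ * v) * v) (deriv (deriv f) (r * v) * v * v) r :=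
    ((hf' _).hasDerivAt.comp r (hasDerivAt_mul_const v)).mul_const v
  simp_rw [hcomp]
  rw [iteratedDeriv_succ, iteratedDeriv_one, ((hasDerivAt_id' r).fun_mul hderiv).deriv]
  ring

theorem stmt2 :
    (∀ v r : ℝ, 0 < v → 0 < r →
      r⁻¹ * deriv (fun ρ => ρ * deriv (fun ρ' => J0 (ρ' * v)) ρ) r = -(v ^ 2) * J0 (r * v))
    ∧ (∀ x : ℝ, 0 < x → iteratedDeriv 2 J0 x + x⁻¹ * deriv J0 x + J0 x = 0) := by
  refine ⟨fun v r _ hr => ?_, fun x hx => ?_⟩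
  · have hJ0 : Differentiable ℝ J0 := fun x => (hasDerivAt_J0 x).differentiableAt
    have hJ0' : Differentiable ℝ (deriv J0) := fun x => (hasDerivAt_deriv_J0 x).differentiableAt
    rw [deriv_mul_deriv_comp_mul_const hJ0 hJ0',
      show r * v * iteratedDeriv 2 J0 (r * v) + deriv J0 (r * v) = -(r * v * J0 (r * v)) by
        linear_combination J0_bessel_ode (r * v)]
    field_simp
  · field_simp
    linear_combination J0_bessel_ode x
end

section
/- Fix r_det > 0, r ∈ (0, r_det] and k ∈ ℝ. Then J₁(r_det v_n) ≠ 0 for every n ∈ ℕ, and there exists a constant C such that | v_n J₀(r v_n) / ( (k²+v_n²) · J₁(r_det v_n)³ ) | ≤ C for all n ∈ ℕ; that is, the data-independent factors in the series inversion formula are uniformly bounded in n. -/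
/-!
Differentiating under the integral sign gives `J₀' = -J₁` and `J₁' = J₀ - J₁ / x`, so
`u = √x J₀` solves `u'' + (1 + 1 / (4x²)) u = 0`. Its energy `E = u'² + u²` satisfies
`|E'| ≤ E / (4x²)`, hence `E(x) e^{± 1/(4x)}` is monotone and `E` stays between `E(1) e^{-1/4}` and
`E(1) e^{1/4}` on `[1, ∞)`. This gives `x J₀(x)² ≤ C`, and at a zero `z` of `J₀` (necessarily
`z > 1`, since `J₀ ≥ cos 1` on `[0, 1]`) it gives `z J₁(z)² = E(z) ≥ c > 0`. For `z = r_det v_n`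
the factor is therefore at most `√(C r_det³ / (r c³))`.
-/

open Real MeasureTheory

open Set intervalIntegral

theorem hasDerivAt_intervalIntegral_of_abs_le {F F' : ℝ → ℝ → ℝ} {a b C : ℝ}
    (hF : ∀ x, Continuous (F x)) (hF' : ∀ x, Continuous (F' x))
    (hbound : ∀ x θ, |F' x θ| ≤ C) (hderiv : ∀ x θ, HasDerivAt (F · θ) (F' x θ) x) (x : ℝ) :
    HasDerivAt (fun y ↦ ∫ θ in a..b, F y θ) (∫ θ in a..b, F' x θ) x :=
  (hasDerivAt_integral_of_dominated_loc_of_deriv_le (bound := fun _ ↦ C) Filter.univ_mem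
    (.of_forall fun y ↦ (hF y).aestronglyMeasurable) ((hF x).intervalIntegrable _ _)
    (hF' x).aestronglyMeasurable (.of_forall fun θ _ y _ ↦ hbound y θ) intervalIntegrable_const
    (.of_forall fun θ _ y _ ↦ hderiv y θ)).2

theorem abs_inv_pi_mul_integral_cos_le_one (f : ℝ → ℝ) :
    |(1 / π) * ∫ θ in (0:ℝ)..π, cos (f θ)| ≤ 1 := by
  have h := norm_integral_le_of_norm_le_const (a := 0) (b := π) (C := 1)
    (f := fun θ ↦ cos (f θ)) fun θ _ ↦ abs_cos_le_one _
  rw [Real.norm_eq_abs, sub_zero, abs_of_pos pi_pos, one_mul] at h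
  rw [abs_mul, abs_of_pos (by positivity), one_div, inv_mul_le_iff₀ pi_pos, mul_one]
  exact h

theorem abs_J0_le_one (x : ℝ) : |J0 x| ≤ 1 := abs_inv_pi_mul_integral_cos_le_one _

theorem abs_J1_le_one (x : ℝ) : |J1 x| ≤ 1 := abs_inv_pi_mul_integral_cos_le_one _

theorem cos_one_le_J0 {x : ℝ} (h0 : 0 ≤ x) (h1 : x ≤ 1) : cos 1 ≤ J0 x := by
  have hmono : ∫ _ in (0:ℝ)..π, cos 1 ≤ ∫ θ in (0:ℝ)..π, cos (x * sin θ) :=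
    integral_mono_on pi_pos.le intervalIntegrable_const
      ((Continuous.intervalIntegrable (by fun_prop)) _ _) fun θ hθ ↦ by
        have hsin := sin_nonneg_of_nonneg_of_le_pi hθ.1 hθ.2
        apply cos_le_cos_of_nonneg_of_le_pi (mul_nonneg h0 hsin) (by linarith [pi_gt_three])
        exact mul_le_one₀ h1 hsin (sin_le_one θ)
  rw [intervalIntegral.integral_const, sub_zero, smul_eq_mul] at hmono
  rw [J0, one_div, le_inv_mul_iff₀ pi_pos]
  exact hmono

-- The integrand is odd about `θ = π / 2`.
theorem integral_cos_mul_cos_mul_sin (x : ℝ) :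
    ∫ θ in (0:ℝ)..π, cos θ * cos (x * sin θ) = 0 := by
  have h := integral_comp_sub_left (a := 0) (b := π) (fun θ ↦ cos θ * cos (x * sin θ)) π
  simp only [cos_pi_sub, sin_pi_sub, sub_self, sub_zero, neg_mul,
    intervalIntegral.integral_neg] at h
  linarith

theorem J1_eq_integral (x : ℝ) : J1 x = (1 / π) * ∫ θ in (0:ℝ)..π, sin (x * sin θ) * sin θ := by
  have hsplit : ∫ θ in (0:ℝ)..π, cos (θ - x * sin θ)
      = (∫ θ in (0:ℝ)..π, cos θ * cos (x * sin θ)) + ∫ θ in (0:ℝ)..π, sin (x * sin θ) * sin θ := by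
    rw [← integral_add ((Continuous.intervalIntegrable (by fun_prop)) _ _)
      ((Continuous.intervalIntegrable (by fun_prop)) _ _)]
    refine integral_congr fun θ _ ↦ ?_
    simp only [cos_sub]
    ring
  rw [J1, hsplit, integral_cos_mul_cos_mul_sin, zero_add]

theorem hasDerivAt_J0_s11 (x : ℝ) : HasDerivAt J0 (-J1 x) x := by
  have h := hasDerivAt_intervalIntegral_of_abs_le (a := 0) (b := π)
    (F := fun x θ ↦ cos (x * sin θ)) (F' := fun x θ ↦ -(sin (x * sin θ) * sin θ))
    (by fun_prop) (by fun_prop)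
    (fun x θ ↦ by
      rw [abs_neg, abs_mul]
      exact mul_le_one₀ (abs_sin_le_one _) (abs_nonneg _) (abs_sin_le_one _))
    (fun x θ ↦ by simpa using ((hasDerivAt_mul_const (sin θ)).cos : HasDerivAt _ _ x)) x
  rw [J1_eq_integral, ← mul_neg, ← intervalIntegral.integral_neg]
  exact h.const_mul _

-- Integrate the derivative of `θ ↦ cos θ * sin (x * sin θ)` over `[0, π]`.
theorem mul_integral_cos_mul_sin_mul_cos_sq (x : ℝ) :
    x * ∫ θ in (0:ℝ)..π, cos (x * sin θ) * cos θ ^ 2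
      = ∫ θ in (0:ℝ)..π, sin (x * sin θ) * sin θ := by
  have hderiv : ∀ θ ∈ uIcc (0:ℝ) π, HasDerivAt (fun θ ↦ cos θ * sin (x * sin θ))
      (x * (cos (x * sin θ) * cos θ ^ 2) - sin (x * sin θ) * sin θ) θ := fun θ _ ↦
    ((hasDerivAt_cos θ).fun_mul ((hasDerivAt_sin θ).const_mul x).sin).congr_deriv (by ring)
  have h := integral_eq_sub_of_hasDerivAt hderiv ((Continuous.intervalIntegrable (by fun_prop)) _ _)
  rw [integral_sub ((Continuous.intervalIntegrable (by fun_prop)) _ _)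
    ((Continuous.intervalIntegrable (by fun_prop)) _ _), intervalIntegral.integral_const_mul] at h
  simp only [sin_pi, sin_zero, mul_zero, sub_self] at h
  linarith

theorem hasDerivAt_J1 {x : ℝ} (hx : x ≠ 0) : HasDerivAt J1 (J0 x - J1 x / x) x := by
  have h := hasDerivAt_intervalIntegral_of_abs_le (a := 0) (b := π)
    (F := fun x θ ↦ sin (x * sin θ) * sin θ) (F' := fun x θ ↦ cos (x * sin θ) * sin θ * sin θ)
    (by fun_prop) (by fun_prop)
    (fun x θ ↦ by
      rw [abs_mul, abs_mul]
      exact mul_le_one₀ (mul_le_one₀ (abs_cos_le_one _) (abs_nonneg _) (abs_sin_le_one _))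
        (abs_nonneg _) (abs_sin_le_one _))
    (fun x θ ↦ by simpa using ((hasDerivAt_mul_const (sin θ)).sin.mul_const (sin θ) :
      HasDerivAt _ _ x)) x
  have hsplit : ∫ θ in (0:ℝ)..π, cos (x * sin θ) * sin θ * sin θ
      = (∫ θ in (0:ℝ)..π, cos (x * sin θ)) - ∫ θ in (0:ℝ)..π, cos (x * sin θ) * cos θ ^ 2 := by
    rw [← integral_sub ((Continuous.intervalIntegrable (by fun_prop)) _ _)
      ((Continuous.intervalIntegrable (by fun_prop)) _ _)]
    refine integral_congr fun θ _ ↦ ?_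
    simp only [cos_sq']
    ring
  have h' : HasDerivAt J1 ((1 / π) * ∫ θ in (0:ℝ)..π, cos (x * sin θ) * sin θ * sin θ) x := by
    simpa only [← J1_eq_integral] using h.const_mul (1 / π)
  refine h'.congr_deriv ?_
  rw [hsplit, J0, J1_eq_integral, ← mul_integral_cos_mul_sin_mul_cos_sq]
  field_simp

section ExpWeight

variable {E E' : ℝ → ℝ} {c : ℝ}

theorem hasDerivAt_mul_exp_div {x : ℝ} (hE : HasDerivAt E (E' x) x) (hx : x ≠ 0) (c : ℝ) :
    HasDerivAt (fun y ↦ E y * exp (c / y)) (exp (c / x) * (E' x - c * E x / x ^ 2)) x := by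
  have hexp := ((hasDerivAt_inv hx).const_mul c).exp
  simp only [← div_eq_mul_inv] at hexp
  refine (hE.fun_mul hexp).congr_deriv ?_
  field_simp
  ring

theorem le_mul_exp_of_deriv_le (hE : ∀ x > 0, HasDerivAt E (E' x) x)
    (hE' : ∀ x > 0, E' x ≤ c * E x / x ^ 2) (hc : 0 ≤ c) {x : ℝ} (hx : 1 ≤ x) (hEx : 0 ≤ E x) :
    E x ≤ E 1 * exp c := by
  have hanti : AntitoneOn (fun y ↦ E y * exp (c / y)) (Ioi 0) := by
    refine antitoneOn_of_hasDerivWithinAt_nonpos (convex_Ioi 0)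
      (f' := fun y ↦ exp (c / y) * (E' y - c * E y / y ^ 2))
      (fun y hy ↦
        (hasDerivAt_mul_exp_div (hE y hy) (ne_of_gt hy) c).continuousAt.continuousWithinAt)
      (fun y hy ↦ ?_) (fun y hy ↦ ?_)
    · rw [interior_Ioi] at hy
      exact (hasDerivAt_mul_exp_div (hE y hy) (ne_of_gt hy) c).hasDerivWithinAt
    · rw [interior_Ioi] at hy
      exact mul_nonpos_of_nonneg_of_nonpos (exp_pos _).le (sub_nonpos.2 (hE' y hy))
  calc E x ≤ E x * exp (c / x) := le_mul_of_one_le_right hEx (one_le_exp (by positivity))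
    _ ≤ E 1 * exp (c / 1) := hanti (mem_Ioi.2 one_pos) (mem_Ioi.2 (by linarith)) hx
    _ = E 1 * exp c := by rw [div_one]

theorem mul_exp_neg_le_of_le_deriv (hE : ∀ x > 0, HasDerivAt E (E' x) x)
    (hE' : ∀ x > 0, -(c * E x / x ^ 2) ≤ E' x) (hc : 0 ≤ c) {x : ℝ} (hx : 1 ≤ x) (hEx : 0 ≤ E x) :
    E 1 * exp (-c) ≤ E x := by
  have hmono : MonotoneOn (fun y ↦ E y * exp (-c / y)) (Ioi 0) := by
    refine monotoneOn_of_hasDerivWithinAt_nonneg (convex_Ioi 0)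
      (f' := fun y ↦ exp (-c / y) * (E' y - -c * E y / y ^ 2))
      (fun y hy ↦
        (hasDerivAt_mul_exp_div (hE y hy) (ne_of_gt hy) (-c)).continuousAt.continuousWithinAt)
      (fun y hy ↦ ?_) (fun y hy ↦ ?_)
    · rw [interior_Ioi] at hy
      exact (hasDerivAt_mul_exp_div (hE y hy) (ne_of_gt hy) (-c)).hasDerivWithinAt
    · rw [interior_Ioi] at hy
      refine mul_nonneg (exp_pos _).le ?_
      rw [neg_mul, neg_div, sub_neg_eq_add]
      linarith [hE' y hy]
  calc E 1 * exp (-c) = E 1 * exp (-c / 1) := by rw [div_one]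
    _ ≤ E x * exp (-c / x) := hmono (mem_Ioi.2 one_pos) (mem_Ioi.2 (by linarith)) hx
    _ ≤ E x := mul_le_of_le_one_right hEx (exp_le_one_iff.2 (by
        rw [neg_div]; exact neg_nonpos.2 (by positivity)))

end ExpWeight

noncomputable def sqrtJ0 (x : ℝ) : ℝ := √x * J0 x

noncomputable def sqrtJ0Deriv (x : ℝ) : ℝ := J0 x / (2 * √x) - √x * J1 x

noncomputable def sqrtJ0Energy (x : ℝ) : ℝ := sqrtJ0Deriv x ^ 2 + sqrtJ0 x ^ 2

theorem hasDerivAt_sqrtJ0 {x : ℝ} (hx : 0 < x) : HasDerivAt sqrtJ0 (sqrtJ0Deriv x) x := by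
  refine ((hasDerivAt_sqrt hx.ne').fun_mul (hasDerivAt_J0_s11 x)).congr_deriv ?_
  rw [sqrtJ0Deriv]
  ring

theorem hasDerivAt_sqrtJ0Deriv {x : ℝ} (hx : 0 < x) :
    HasDerivAt sqrtJ0Deriv (-(1 + (4 * x ^ 2)⁻¹) * sqrtJ0 x) x := by
  have hs : 0 < √x := sqrt_pos.2 hx
  have h := ((hasDerivAt_J0_s11 x).div ((hasDerivAt_sqrt hx.ne').const_mul 2) (by positivity)).sub
    ((hasDerivAt_sqrt hx.ne').fun_mul (hasDerivAt_J1 hx.ne'))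
  refine h.congr_deriv ?_
  have hx_sq : x = √x ^ 2 := (sq_sqrt hx.le).symm
  rw [sqrtJ0]
  generalize √x = s at hs hx_sq ⊢
  subst hx_sq
  field_simp
  ring

theorem hasDerivAt_sqrtJ0Energy {x : ℝ} (hx : 0 < x) :
    HasDerivAt sqrtJ0Energy (-(sqrtJ0Deriv x * sqrtJ0 x) / (2 * x ^ 2)) x := by
  refine (((hasDerivAt_sqrtJ0Deriv hx).pow 2).add ((hasDerivAt_sqrtJ0 hx).pow 2)).congr_deriv ?_
  field_simp
  ring

theorem abs_deriv_sqrtJ0Energy_le {x : ℝ} (hx : 0 < x) :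
    |-(sqrtJ0Deriv x * sqrtJ0 x) / (2 * x ^ 2)| ≤ 4⁻¹ * sqrtJ0Energy x / x ^ 2 := by
  rw [abs_div, abs_neg, abs_of_pos (by positivity : 0 < 2 * x ^ 2), div_le_div_iff₀ (by positivity)
    (by positivity), sqrtJ0Energy, abs_mul]
  nlinarith [two_mul_le_add_sq |sqrtJ0Deriv x| |sqrtJ0 x|, sq_abs (sqrtJ0Deriv x),
    sq_abs (sqrtJ0 x), sq_nonneg x]

theorem sqrtJ0Energy_le {x : ℝ} (hx : 1 ≤ x) : sqrtJ0Energy x ≤ sqrtJ0Energy 1 * exp 4⁻¹ :=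
  le_mul_exp_of_deriv_le (fun _ hy ↦ hasDerivAt_sqrtJ0Energy hy)
    (fun _ hy ↦ (le_abs_self _).trans (abs_deriv_sqrtJ0Energy_le hy)) (by norm_num) hx
    (by unfold sqrtJ0Energy; positivity)

theorem le_sqrtJ0Energy {x : ℝ} (hx : 1 ≤ x) : sqrtJ0Energy 1 * exp (-4⁻¹) ≤ sqrtJ0Energy x :=
  mul_exp_neg_le_of_le_deriv (fun _ hy ↦ hasDerivAt_sqrtJ0Energy hy)
    (fun _ hy ↦ neg_le_of_abs_le (abs_deriv_sqrtJ0Energy_le hy)) (by norm_num) hx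
    (by unfold sqrtJ0Energy; positivity)

theorem sqrtJ0Energy_one_le : sqrtJ0Energy 1 ≤ 13 / 4 := by
  have h0 := abs_le.1 (abs_J0_le_one 1)
  have h1 := abs_le.1 (abs_J1_le_one 1)
  rw [sqrtJ0Energy, sqrtJ0Deriv, sqrtJ0, sqrt_one]
  nlinarith

theorem cos_one_sq_le_sqrtJ0Energy_one : cos 1 ^ 2 ≤ sqrtJ0Energy 1 := by
  have h := cos_one_le_J0 zero_le_one le_rfl
  rw [sqrtJ0Energy, sqrtJ0, sqrt_one, one_mul]
  nlinarith [cos_one_pos, sq_nonneg (sqrtJ0Deriv 1)]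

theorem mul_J0_sq_le {x : ℝ} (hx : 0 ≤ x) : x * J0 x ^ 2 ≤ 13 / 4 * exp 4⁻¹ := by
  rcases lt_or_ge x 1 with hx1 | hx1
  · have hJ0 : J0 x ^ 2 ≤ 1 := (sq_le_one_iff_abs_le_one _).2 (abs_J0_le_one x)
    have : 1 ≤ exp 4⁻¹ := one_le_exp (by norm_num)
    nlinarith
  · calc x * J0 x ^ 2 = sqrtJ0 x ^ 2 := by rw [sqrtJ0, mul_pow, sq_sqrt hx]
      _ ≤ sqrtJ0Energy x := le_add_of_nonneg_left (sq_nonneg _)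
      _ ≤ sqrtJ0Energy 1 * exp 4⁻¹ := sqrtJ0Energy_le hx1
      _ ≤ 13 / 4 * exp 4⁻¹ := by gcongr; exact sqrtJ0Energy_one_le

theorem one_lt_of_J0_eq_zero {z : ℝ} (hz : 0 ≤ z) (h : J0 z = 0) : 1 < z := by
  by_contra! hz1
  linarith [cos_one_le_J0 hz hz1, cos_one_pos]

theorem le_mul_J1_sq_of_J0_eq_zero {z : ℝ} (hz : 0 ≤ z) (h : J0 z = 0) :
    cos 1 ^ 2 * exp (-4⁻¹) ≤ z * J1 z ^ 2 := by
  have hz1 := one_lt_of_J0_eq_zero hz h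
  calc cos 1 ^ 2 * exp (-4⁻¹) ≤ sqrtJ0Energy 1 * exp (-4⁻¹) := by
        gcongr; exact cos_one_sq_le_sqrtJ0Energy_one
    _ ≤ sqrtJ0Energy z := le_sqrtJ0Energy hz1.le
    _ = z * J1 z ^ 2 := by
        rw [sqrtJ0Energy, sqrtJ0Deriv, sqrtJ0, h, zero_div, zero_sub, neg_sq, mul_pow, sq_sqrt hz,
          mul_zero, zero_pow two_ne_zero, add_zero]

theorem J1_ne_zero_of_J0_eq_zero {z : ℝ} (hz : 0 ≤ z) (h : J0 z = 0) : J1 z ≠ 0 := by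
  intro h1
  have := le_mul_J1_sq_of_J0_eq_zero hz h
  rw [h1, zero_pow two_ne_zero, mul_zero] at this
  exact this.not_gt (mul_pos (pow_pos cos_one_pos 2) (exp_pos _))

theorem abs_mul_div_le_sqrt {v r R k a b B c : ℝ} (hv : 0 < v) (hr : 0 < r) (hR : 0 < R)
    (hc : 0 < c) (ha : r * v * a ^ 2 ≤ B) (hb : c ≤ R * v * b ^ 2) :
    |v * a / ((k ^ 2 + v ^ 2) * b ^ 3)| ≤ √(B * R ^ 3 / (r * c ^ 3)) := by
  have hb0 : b ≠ 0 := by rintro rfl; linarith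
  have hB : 0 ≤ B := le_trans (by positivity) ha
  apply abs_le_sqrt
  rw [div_pow, div_le_div_iff₀ (by positivity) (by positivity)]
  calc (v * a) ^ 2 * (r * c ^ 3) = v * (r * v * a ^ 2) * c ^ 3 := by ring
    _ ≤ v * B * c ^ 3 := by gcongr
    _ ≤ v * B * (R * v * b ^ 2) ^ 3 := by gcongr
    _ = B * R ^ 3 * ((v ^ 2) ^ 2 * (b ^ 3) ^ 2) := by ring
    _ ≤ B * R ^ 3 * ((k ^ 2 + v ^ 2) * b ^ 3) ^ 2 := by
        rw [mul_pow]; gcongr; exact le_add_of_nonneg_left (sq_nonneg k)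

theorem stmt11_general
    (rdet : ℝ) (hrdet : 0 < rdet)
    (v : ℕ → ℝ) (hv_pos : ∀ n, 0 < v n)
    (hv_zero : ∀ n, J0 (rdet * v n) = 0)
    (r : ℝ) (hr : 0 < r) (k : ℝ) :
    (∀ n : ℕ, J1 (rdet * v n) ≠ 0)
    ∧ ∃ C : ℝ, ∀ n : ℕ,
        |v n * J0 (r * v n) / ((k ^ 2 + (v n) ^ 2) * (J1 (rdet * v n)) ^ 3)| ≤ C := by
  have hz : ∀ n, 0 ≤ rdet * v n := fun n ↦ (mul_pos hrdet (hv_pos n)).le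
  refine ⟨fun n ↦ J1_ne_zero_of_J0_eq_zero (hz n) (hv_zero n), _, fun n ↦
    abs_mul_div_le_sqrt (hv_pos n) hr hrdet (mul_pos (pow_pos cos_one_pos 2) (exp_pos _))
      (mul_J0_sq_le (mul_pos hr (hv_pos n)).le) (le_mul_J1_sq_of_J0_eq_zero (hz n) (hv_zero n))⟩

theorem stmt11
    (rdet : ℝ) (hrdet : 0 < rdet)
    (v : ℕ → ℝ) (hv_mono : StrictMono v) (hv_pos : ∀ n, 0 < v n)
    (hv_zero : ∀ n, J0 (rdet * v n) = 0)
    (hv_all : ∀ x : ℝ, 0 < x → J0 (rdet * x) = 0 → ∃ n, v n = x)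
    (r : ℝ) (hr : 0 < r) (hr' : r ≤ rdet) (k : ℝ) :
    (∀ n : ℕ, J1 (rdet * v n) ≠ 0)
    ∧ ∃ C : ℝ, ∀ n : ℕ,
        |v n * J0 (r * v n) / ((k ^ 2 + (v n) ^ 2) * (J1 (rdet * v n)) ^ 3)| ≤ C :=
  stmt11_general rdet hrdet v hv_pos hv_zero r hr k
end
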